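/- arXiv:1611.07506 — 2 statements merged into one kernel-verified Lean document; each statement's English description precedes it below -/
import Mathlib

section
/- Let k be a field and f_1,...,f_m ∈ k[x_1,...,x_n] with m ≥ 2 and gcd(f_1,...,f_m) = 1. Then there exists an infinite sequence of polynomials h_1, h_2, h_3, ... in the ideal (f_1,...,f_m) such that gcd(h_i, h_j) = 1 for all i ≠ j. -/
/-!
Since the `fᵢ` have no common non-unit divisor, the ideal `I = (f₁, …, f_m)` lies in no principal
prime ideal `(p)`. By prime avoidance, for every `g ≠ 0` it is then not covered by the finitely many
ideals `(q)` with `q` a prime factor of `g`, so some `h ∈ I` is coprime to `g`. Choosing each `hₜ`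
coprime to `f₀ h₀ ⋯ hₜ₋₁` for a fixed nonzero non-unit `f₀ ∈ I` gives the sequence; the factor `f₀`
keeps the product a non-unit, which forces every `hₜ` to be nonzero.
-/

open UniqueFactorizationMonoid

theorem exists_pairwise_isRelPrime_of_forall_exists_isRelPrime {M : Type*}
    [CommMonoidWithZero M] [NoZeroDivisors M] {S : Set M} {f₀ : M} (hf₀ : f₀ ≠ 0)
    (hf₀u : ¬IsUnit f₀) (hS : ∀ g, g ≠ 0 → ∃ h ∈ S, IsRelPrime g h) :
    ∃ h : ℕ → M, (∀ i, h i ∈ S) ∧ Pairwise fun i j => IsRelPrime (h i) (h j) := by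
  choose! next hnextS hnext using hS
  -- `P t = f₀ * next (P 0) * ⋯ * next (P (t - 1))`
  let P : ℕ → M := fun t => Nat.rec f₀ (fun _ g => g * next g) t
  have hf₀P : ∀ t, f₀ ∣ P t := fun t => by
    induction t with
    | zero => exact dvd_rfl
    | succ t ih => exact ih.mul_right _
  have hP : ∀ t, P t ≠ 0 := fun t => by
    induction t with
    | zero => exact hf₀
    | succ t ih =>
      refine mul_ne_zero ih fun h0 => hf₀u (isUnit_of_dvd_unit (hf₀P t) ?_)
      rw [← isRelPrime_zero_right, ← h0]
      exact hnext _ ih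
  have hdvdP : ∀ s t, s < t → next (P s) ∣ P t := fun s t hst => by
    induction t, hst using Nat.le_induction with
    | base => exact dvd_mul_left _ _
    | succ t _ ih => exact ih.mul_right _
  have hlt : ∀ s t, s < t → IsRelPrime (next (P s)) (next (P t)) := fun s t hst =>
    (hnext _ (hP t)).of_dvd_left (hdvdP s t hst)
  refine ⟨fun t => next (P t), fun t => hnextS _ (hP t), fun s t hst => ?_⟩
  rcases hst.lt_or_gt with hst | hst
  · exact hlt s t hst
  · exact (hlt t s hst).symm

namespace Ideal

variable {R : Type*} [CommRing R] [IsDomain R] [UniqueFactorizationMonoid R] {I : Ideal R}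

theorem exists_mem_isRelPrime (hI : ∀ p : R, Prime p → ¬I ≤ span {p}) {g : R} (hg : g ≠ 0) :
    ∃ h ∈ I, IsRelPrime g h := by
  classical
  have hprime : ∀ q ∈ (factors g).toFinset, Prime q := fun q hq =>
    prime_of_factor q (Multiset.mem_toFinset.mp hq)
  have hnot : ¬(I : Set R) ⊆ ⋃ q ∈ ((factors g).toFinset : Set R), span {q} := by
    rw [subset_union_prime 0 0 fun q hq _ _ => (span_singleton_prime (hprime q hq).ne_zero).mpr
      (hprime q hq)]
    rintro ⟨q, hq, hle⟩
    exact hI q (hprime q hq) hle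
  obtain ⟨h, hhI, hh⟩ := Set.not_subset.mp hnot
  refine ⟨h, hhI, (isRelPrime_iff_no_prime_factors hg).mpr fun d hdg hdh hd => hh ?_⟩
  obtain ⟨q, hq, hdq⟩ := exists_mem_factors_of_dvd hg hd.irreducible hdg
  exact Set.mem_biUnion (Multiset.mem_toFinset.mpr hq)
    (mem_span_singleton.mpr (hdq.dvd_iff_dvd_left.mp hdh))

theorem exists_pairwise_isRelPrime (hI : ∀ p : R, I ≤ span {p} → IsUnit p) :
    ∃ h : ℕ → R, (∀ i, h i ∈ I) ∧ Pairwise fun i j => IsRelPrime (h i) (h j) := by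
  by_cases htop : I = ⊤
  · exact ⟨fun _ => 1, fun _ => htop ▸ Submodule.mem_top, fun _ _ _ => isRelPrime_one_left⟩
  obtain ⟨f₀, hf₀I, hf₀⟩ : ∃ f₀ ∈ I, f₀ ≠ 0 :=
    Submodule.exists_mem_ne_zero_of_ne_bot fun hbot => not_isUnit_zero (hI 0 (by simp [hbot]))
  exact exists_pairwise_isRelPrime_of_forall_exists_isRelPrime hf₀
    (fun hu => htop (eq_top_of_isUnit_mem I hf₀I hu))
    fun g hg => exists_mem_isRelPrime (fun p hp hle => hp.not_isUnit (hI p hle)) hg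

end Ideal

theorem exists_infinite_pairwise_coprime_in_ideal_general
    (k : Type) [Field k] (n m : ℕ)
    (f : Fin m → MvPolynomial (Fin n) k)
    (hgcd : ∀ p : MvPolynomial (Fin n) k, (∀ i, p ∣ f i) → IsUnit p) :
    ∃ h : ℕ → MvPolynomial (Fin n) k,
      (∀ i, h i ∈ Ideal.span (Set.range f)) ∧
      (∀ i j, i ≠ j → IsRelPrime (h i) (h j)) :=
  Ideal.exists_pairwise_isRelPrime fun p hle =>
    hgcd p fun i => Ideal.mem_span_singleton.mp (hle (Ideal.subset_span ⟨i, rfl⟩))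

/-- If `f₁, …, f_m ∈ k[x₁,…,x_n]` (m ≥ 2) have `gcd(f₁,…,f_m) = 1`
(i.e. every common divisor is a unit), then there is an infinite sequence of
polynomials `h₀, h₁, h₂, …` in the ideal `(f₁,…,f_m)` that are pairwise coprime. -/
theorem exists_infinite_pairwise_coprime_in_ideal
    (k : Type) [Field k] (n m : ℕ) (hm : 2 ≤ m)
    (f : Fin m → MvPolynomial (Fin n) k)
    (hgcd : ∀ p : MvPolynomial (Fin n) k, (∀ i, p ∣ f i) → IsUnit p) :
    ∃ h : ℕ → MvPolynomial (Fin n) k,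
      (∀ i, h i ∈ Ideal.span (Set.range f)) ∧
      (∀ i j, i ≠ j → IsRelPrime (h i) (h j)) :=
  exists_infinite_pairwise_coprime_in_ideal_general k n m f hgcd
end

section
/- Let J = (f_1,...,f_m) ⊂ T = k[s,t,u] be a homogeneous ideal. Then for every integer p, the graded Betti number β_{2,p}(J) = dim_k Tor_2^T(J, k)_p satisfies β_{2,p}(J) ≤ H_J(p−2) − H_J(p−3), where H_J is the Hilbert function of J. -/
open MvPolynomial

abbrev S3 (k : Type) [Field k] := MvPolynomial (Fin 3) k

/-- The Hilbert function of an ideal `J ⊆ k[s,t,u]`: `H_J(p) = dim_k J_p`. -/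
noncomputable def hilbertFunction (k : Type) [Field k]
    (J : Ideal (S3 k)) (p : ℕ) : ℕ :=
  Module.finrank k ↥(J.restrictScalars k ⊓ homogeneousSubmodule (Fin 3) k p)

/-- A minimal *graded* free resolution
`0 → ⊕ᵢ S(−deg2 i) → ⊕ᵢ S(−deg1 i) → ⊕ᵢ S(−deg0 i) → J → 0` of a homogeneous
ideal `J ⊆ S = k[s,t,u]`; the number of `i` with `deg2 i = p` is the graded
Betti number `β_{2,p}(J) = dim_k Tor₂^S(J,k)_p`. -/
structure GradedMinFreeRes (k : Type) [Field k] (J : Ideal (S3 k)) where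
  b0 : ℕ
  b1 : ℕ
  b2 : ℕ
  deg0 : Fin b0 → ℕ
  deg1 : Fin b1 → ℕ
  deg2 : Fin b2 → ℕ
  ε : (Fin b0 → S3 k) →ₗ[S3 k] S3 k
  d1 : (Fin b1 → S3 k) →ₗ[S3 k] (Fin b0 → S3 k)
  d2 : (Fin b2 → S3 k) →ₗ[S3 k] (Fin b1 → S3 k)
  range_eps : LinearMap.range ε = J
  exact1 : LinearMap.ker ε = LinearMap.range d1
  exact2 : LinearMap.ker d1 = LinearMap.range d2
  inj2 : LinearMap.ker d2 = ⊥
  min1 : ∀ x i, constantCoeff (d1 x i) = 0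
  min2 : ∀ x i, constantCoeff (d2 x i) = 0
  hom0 : ∀ i, (ε (Pi.single i 1)).IsHomogeneous (deg0 i)
  hom1 : ∀ i j, d1 (Pi.single j 1) i = 0 ∨
    (deg0 i ≤ deg1 j ∧ (d1 (Pi.single j 1) i).IsHomogeneous (deg1 j - deg0 i))
  hom2 : ∀ i j, d2 (Pi.single j 1) i = 0 ∨
    (deg1 i ≤ deg2 j ∧ (d2 (Pi.single j 1) i).IsHomogeneous (deg2 j - deg1 i))


open Module

/-!
`Tor₂^T(J, k)` can be computed from the Koszul complex `K(s,t,u) ⊗ J`. Since the Koszul complex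
of `T` is exact, its 2-cycles are the triples `(u f, -t f, s f)` with `f ∈ (J : 𝔪)`, and its
3-cycles vanish, so `β_{2,p}(J) = dim (J : 𝔪)_{p-3} - H_J(p-3)`. Multiplication by `s` embeds
`(J : 𝔪)_{p-3}` into `J_{p-2}`.

Here `Tor` is given by a minimal resolution `F`, so the comparison is made by hand through the
double complex `F ⊗ K(s,t,u)`: every basis element of `F₂` of degree `p` is carried by a zig-zag
to some `f ∈ (J : 𝔪)_{p-3}`, and minimality together with the injectivity of `d₂` shows that
these `f` are linearly independent modulo `J`.
-/

theorem Submodule.card_add_finrank_le {K V ι : Type*} [Field K] [AddCommGroup V] [Module K V]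
    [Fintype ι] {M Q : Submodule K V} [FiniteDimensional K Q] (hMQ : M ≤ Q) (v : ι → V)
    (hvQ : ∀ i, v i ∈ Q) (hv : ∀ c : ι → K, ∑ i, c i • v i ∈ M → c = 0) :
    Fintype.card ι + finrank K M ≤ finrank K Q := by
  set W := Submodule.span K (Set.range v)
  have hWQ : W ≤ Q := Submodule.span_le.mpr (Set.range_subset_iff.mpr hvQ)
  have := Submodule.finiteDimensional_of_le hWQ
  have := Submodule.finiteDimensional_of_le hMQ
  have hind : LinearIndependent K v := Fintype.linearIndependent_iff.mpr fun c hc =>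
    congrFun (hv c (hc ▸ M.zero_mem))
  have hdisj : W ⊓ M = ⊥ := by
    refine (Submodule.eq_bot_iff _).mpr fun x ⟨hxW, hxM⟩ => ?_
    obtain ⟨c, rfl⟩ := (Submodule.mem_span_range_iff_exists_fun K).mp hxW
    simp [hv c hxM]
  calc Fintype.card ι + finrank K M = finrank K ↥(W ⊔ M) := by
        rw [← finrank_span_eq_card hind, ← Submodule.finrank_sup_add_finrank_inf_eq, hdisj,
          finrank_bot, add_zero]
    _ ≤ finrank K Q := Submodule.finrank_mono (sup_le hWQ hMQ)

namespace MvPolynomial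

variable {σ R : Type*}

section CommSemiring

variable [CommSemiring R]

theorem exists_sum_mul_X_eq_of_constantCoeff_eq_zero [Fintype σ] {q : MvPolynomial σ R}
    (hq : constantCoeff q = 0) : ∃ c : σ → MvPolynomial σ R, ∑ i, c i * X i = q := by
  refine Ideal.mem_span_range_iff_exists_fun.mp ?_
  change q ∈ idealOfVars σ R
  rw [← pow_one (idealOfVars σ R), mem_pow_idealOfVars_iff']
  intro x hx
  rw [Nat.lt_one_iff, Finsupp.degree_eq_zero_iff] at hx
  rwa [hx, ← constantCoeff_eq]

theorem mem_span_X_image_of_X_mul_mem {s : Set σ} {i : σ} (hi : i ∉ s)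
    {a : MvPolynomial σ R} (h : X i * a ∈ Ideal.span (X '' s)) : a ∈ Ideal.span (X '' s) := by
  classical
  rw [mem_ideal_span_X_image] at h ⊢
  intro m hm
  obtain ⟨j, hj, hne⟩ := h (Finsupp.single i 1 + m) (by simpa using hm)
  have hij : i ≠ j := fun hij => hi (hij ▸ hj)
  exact ⟨j, hj, by simpa [Finsupp.single_apply, hij] using hne⟩

/-- The degree-`n` component of `q` regarded as an element of the twist `T(-e)`. -/
noncomputable def twistComponent (e n : ℕ) : MvPolynomial σ R →ₗ[R] MvPolynomial σ R :=
  if e ≤ n then homogeneousComponent (n - e) else 0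

theorem twistComponent_of_lt {e n : ℕ} (h : n < e) (q : MvPolynomial σ R) :
    twistComponent e n q = 0 := by
  simp [twistComponent, not_le.mpr h]

theorem twistComponent_add_self (e n : ℕ) (q : MvPolynomial σ R) :
    twistComponent e (n + e) q = homogeneousComponent n q := by
  simp [twistComponent]

attribute [local instance] MvPolynomial.gradedAlgebra in
theorem twistComponent_mul_of_isHomogeneous {h : MvPolynomial σ R} {d : ℕ}
    (hh : h.IsHomogeneous d) (e n : ℕ) (q : MvPolynomial σ R) :
    twistComponent e n (q * h) = twistComponent (e + d) n q * h := by
  have hmem : h ∈ homogeneousSubmodule σ R d := hh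
  have hc (m : ℕ) (φ : MvPolynomial σ R) : homogeneousComponent m φ =
      (DirectSum.decompose (homogeneousSubmodule σ R) φ m : MvPolynomial σ R) :=
    (decomposition.decompose'_apply φ m).symm
  by_cases hen : e ≤ n
  · by_cases hedn : e + d ≤ n
    · simp only [twistComponent, if_pos hen, if_pos hedn, hc]
      rw [DirectSum.coe_decompose_mul_of_right_mem_of_le _ hmem (by omega), Nat.sub_sub]
    · simp only [twistComponent, if_pos hen, if_neg hedn, hc, LinearMap.zero_apply, zero_mul]
      exact DirectSum.coe_decompose_mul_of_right_mem_of_not_le _ hmem (by omega)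
  · simp [twistComponent, hen, show ¬e + d ≤ n by omega]

theorem twistComponent_isHomogeneous_mul {h : MvPolynomial σ R} {d : ℕ}
    (hh : h.IsHomogeneous d) (e n : ℕ) (q : MvPolynomial σ R) :
    twistComponent e n (h * q) = h * twistComponent (e + d) n q := by
  rw [mul_comm, twistComponent_mul_of_isHomogeneous hh, mul_comm]

variable {ι κ : Type*}

/-- The degree-`n` component in `⊕ₐ T(-D a)`. -/
noncomputable def gradedPart (D : ι → ℕ) (n : ℕ) :
    (ι → MvPolynomial σ R) →ₗ[R] (ι → MvPolynomial σ R) :=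
  LinearMap.pi fun a => twistComponent (D a) n ∘ₗ LinearMap.proj a

@[simp]
theorem gradedPart_apply (D : ι → ℕ) (n : ℕ) (x : ι → MvPolynomial σ R) (a : ι) :
    gradedPart D n x a = twistComponent (D a) n (x a) :=
  rfl

theorem gradedPart_smul_of_isHomogeneous {h : MvPolynomial σ R} {d : ℕ}
    (hh : h.IsHomogeneous d) (D : ι → ℕ) (n : ℕ) (x : ι → MvPolynomial σ R) :
    gradedPart D n (h • x) = h • gradedPart (fun a => D a + d) n x := by
  funext a
  exact twistComponent_isHomogeneous_mul hh (D a) n (x a)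

theorem map_gradedPart_eq_twistComponent [Fintype ι] [DecidableEq ι]
    (ℓ : (ι → MvPolynomial σ R) →ₗ[MvPolynomial σ R] MvPolynomial σ R) {D : ι → ℕ} {e : ℕ}
    (hℓ : ∀ j, ℓ (Pi.single j 1) = 0 ∨
      (e ≤ D j ∧ (ℓ (Pi.single j 1)).IsHomogeneous (D j - e)))
    (c n : ℕ) (x : ι → MvPolynomial σ R) :
    ℓ (gradedPart (fun j => D j + c) n x) = twistComponent (e + c) n (ℓ x) := by
  have hsum (y : ι → MvPolynomial σ R) : ℓ y = ∑ j, y j * ℓ (Pi.single j 1) := by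
    conv_lhs => rw [pi_eq_sum_univ' y]
    simp only [map_sum, map_smul, smul_eq_mul]
  rw [hsum, hsum, map_sum]
  refine Finset.sum_congr rfl fun j _ => ?_
  rcases hℓ j with h0 | ⟨hle, hhom⟩
  · simp [h0]
  · rw [twistComponent_mul_of_isHomogeneous hhom, gradedPart_apply,
      show e + c + (D j - e) = D j + c by omega]

theorem map_gradedPart [Fintype ι] [DecidableEq ι]
    (L : (ι → MvPolynomial σ R) →ₗ[MvPolynomial σ R] (κ → MvPolynomial σ R))
    {D : ι → ℕ} {E : κ → ℕ}
    (hL : ∀ i j, L (Pi.single j 1) i = 0 ∨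
      (E i ≤ D j ∧ (L (Pi.single j 1) i).IsHomogeneous (D j - E i)))
    (c n : ℕ) (x : ι → MvPolynomial σ R) :
    L (gradedPart (fun j => D j + c) n x) = gradedPart (fun i => E i + c) n (L x) := by
  funext i
  exact map_gradedPart_eq_twistComponent (LinearMap.proj i ∘ₗ L) (hL i) c n x

theorem gradedPart_single_one [DecidableEq ι] (D : ι → ℕ) (j : ι) :
    gradedPart D (D j) (Pi.single j (1 : MvPolynomial σ R)) = Pi.single j 1 := by
  funext a
  rcases eq_or_ne a j with rfl | h
  · simp [twistComponent]
  · simp [h]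

end CommSemiring

section Koszul

variable [CommRing R] [IsDomain R]

theorem X_dvd_of_X_dvd_X_mul {i j : σ} (hij : i ≠ j)
    {a : MvPolynomial σ R} (h : X i ∣ X j * a) : X i ∣ a :=
  (X_prime.dvd_or_dvd h).resolve_left (by rwa [X_dvd_X])

theorem koszul_exact_one {a b c : MvPolynomial (Fin 3) R}
    (h : X 0 * a + X 1 * b + X 2 * c = 0) :
    ∃ v₁ v₂ v₃, a = X 1 * v₁ + X 2 * v₂ ∧ b = -(X 0 * v₁) + X 2 * v₃ ∧
      c = -(X 0 * v₂) - X 1 * v₃ := by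
  have ha : a ∈ Ideal.span (X '' {1, 2}) := by
    refine mem_span_X_image_of_X_mul_mem (i := 0) (by decide) ?_
    rw [Set.image_pair, Ideal.mem_span_pair]
    exact ⟨-b, -c, by linear_combination -h⟩
  rw [Set.image_pair, Ideal.mem_span_pair] at ha
  obtain ⟨v₁, v₂, ha⟩ := ha
  obtain ⟨v₃, hb⟩ : X 2 ∣ b + X 0 * v₁ :=
    X_dvd_of_X_dvd_X_mul (j := 1) (by decide)
      ⟨-(c + X 0 * v₂), by linear_combination h + X 0 * ha⟩
  refine ⟨v₁, v₂, v₃, by linear_combination -ha, by linear_combination hb, ?_⟩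
  refine mul_left_cancel₀ (X_ne_zero (2 : Fin 3)) ?_
  linear_combination h + X 0 * ha - X 1 * hb

theorem koszul_exact_two {a b c : MvPolynomial (Fin 3) R}
    (h₁ : X 1 * a + X 2 * b = 0) (h₂ : -(X 0 * a) + X 2 * c = 0) :
    ∃ f, a = X 2 * f ∧ b = -(X 1 * f) ∧ c = X 0 * f := by
  obtain ⟨f, hf⟩ : X 2 ∣ a :=
    X_dvd_of_X_dvd_X_mul (j := 1) (by decide) ⟨-b, by linear_combination h₁⟩
  refine ⟨f, hf, mul_left_cancel₀ (X_ne_zero (2 : Fin 3)) ?_,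
    mul_left_cancel₀ (X_ne_zero (2 : Fin 3)) ?_⟩
  · linear_combination h₁ - X 1 * hf
  · linear_combination h₂ + X 0 * hf

end Koszul

section Field

variable {k : Type*} [Field k]

instance [Finite σ] (n : ℕ) : FiniteDimensional k (homogeneousSubmodule σ k n) :=
  Submodule.finiteDimensional_of_le fun _ hq =>
    (mem_restrictTotalDegree σ n _).mpr (IsHomogeneous.totalDegree_le hq)

theorem finrank_comap_mul_X_inf_le [Finite σ] (J : Ideal (MvPolynomial σ k)) (i : σ) (n : ℕ) :
    finrank k ↥((J.restrictScalars k).comap (LinearMap.mulLeft k (X i)) ⊓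
        homogeneousSubmodule σ k n) ≤
      finrank k ↥(J.restrictScalars k ⊓ homogeneousSubmodule σ k (n + 1)) := by
  set Q := (J.restrictScalars k).comap (LinearMap.mulLeft k (X i)) ⊓ homogeneousSubmodule σ k n
  have hmaps : ∀ q ∈ Q, X i * q ∈ J.restrictScalars k ⊓ homogeneousSubmodule σ k (n + 1) :=
    fun q ⟨hqJ, hqn⟩ => ⟨hqJ, by simpa [add_comm] using (isHomogeneous_X k i).mul hqn⟩
  refine LinearMap.finrank_le_finrank_of_injective
    (f := (LinearMap.mulLeft k (X i)).restrict hmaps) fun a b hab => ?_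
  exact Subtype.ext (mul_left_cancel₀ (X_ne_zero i) (congrArg Subtype.val hab))

end Field

end MvPolynomial


namespace GradedMinFreeRes

variable {k : Type} [Field k] {J : Ideal (S3 k)} (res : GradedMinFreeRes k J)

/-- `(z, f) ∈ res.koszulLifts` records a zig-zag through the double complex `F ⊗ K(s,t,u)` from
the syzygy `z ∈ F₁` to `f ∈ T`: `z = Σ xᵢ zᵢ`, `(d₁ zᵢ)ᵢ` is the Koszul boundary of some
`v ∈ F₀³`, and `(ε vᵢ)ᵢ` is the Koszul boundary of `f`. -/
def koszulLifts : Submodule (S3 k) ((Fin res.b1 → S3 k) × S3 k) where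
  carrier := {zf | ∃ z₁ z₂ z₃ v₁ v₂ v₃,
    zf.1 = (X 0 : S3 k) • z₁ + (X 1 : S3 k) • z₂ + (X 2 : S3 k) • z₃ ∧
    res.d1 z₁ = (X 1 : S3 k) • v₁ + (X 2 : S3 k) • v₂ ∧
    res.d1 z₂ = -((X 0 : S3 k) • v₁) + (X 2 : S3 k) • v₃ ∧
    res.d1 z₃ = -((X 0 : S3 k) • v₂) - (X 1 : S3 k) • v₃ ∧
    res.ε v₁ = X 2 * zf.2 ∧ res.ε v₂ = -(X 1 * zf.2) ∧ res.ε v₃ = X 0 * zf.2}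
  zero_mem' := ⟨0, 0, 0, 0, 0, 0, by simp⟩
  add_mem' := by
    rintro zf zf' ⟨z₁, z₂, z₃, v₁, v₂, v₃, e₀, e₁, e₂, e₃, e₄, e₅, e₆⟩
      ⟨z₁', z₂', z₃', v₁', v₂', v₃', e₀', e₁', e₂', e₃', e₄', e₅', e₆'⟩
    refine ⟨z₁ + z₁', z₂ + z₂', z₃ + z₃', v₁ + v₁', v₂ + v₂', v₃ + v₃', ?_, ?_, ?_, ?_, ?_, ?_, ?_⟩
    · rw [Prod.fst_add, e₀, e₀']; module
    · rw [map_add, e₁, e₁']; module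
    · rw [map_add, e₂, e₂']; module
    · rw [map_add, e₃, e₃']; module
    · rw [map_add, e₄, e₄', Prod.snd_add]; ring
    · rw [map_add, e₅, e₅', Prod.snd_add]; ring
    · rw [map_add, e₆, e₆', Prod.snd_add]; ring
  smul_mem' := by
    rintro q zf ⟨z₁, z₂, z₃, v₁, v₂, v₃, e₀, e₁, e₂, e₃, e₄, e₅, e₆⟩
    refine ⟨q • z₁, q • z₂, q • z₃, q • v₁, q • v₂, q • v₃, ?_, ?_, ?_, ?_, ?_, ?_, ?_⟩
    · rw [Prod.smul_fst, e₀]; module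
    · rw [map_smul, e₁]; module
    · rw [map_smul, e₂]; module
    · rw [map_smul, e₃]; module
    · rw [map_smul, e₄, Prod.smul_snd, smul_eq_mul, smul_eq_mul]; ring
    · rw [map_smul, e₅, Prod.smul_snd, smul_eq_mul, smul_eq_mul]; ring
    · rw [map_smul, e₆, Prod.smul_snd, smul_eq_mul, smul_eq_mul]; ring

variable {res}

theorem mem_range_d1_iff {v : Fin res.b0 → S3 k} :
    v ∈ LinearMap.range res.d1 ↔ res.ε v = 0 := by
  rw [← res.exact1, LinearMap.mem_ker]

theorem mem_range_d2_iff {z : Fin res.b1 → S3 k} :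
    z ∈ LinearMap.range res.d2 ↔ res.d1 z = 0 := by
  rw [← res.exact2, LinearMap.mem_ker]

theorem X_mul_mem_of_mem_koszulLifts {z : Fin res.b1 → S3 k} {f : S3 k}
    (h : (z, f) ∈ res.koszulLifts) (i : Fin 3) : X i * f ∈ J := by
  obtain ⟨-, -, -, v₁, v₂, v₃, -, -, -, -, e₁, e₂, e₀⟩ := h
  rw [← res.range_eps]
  fin_cases i
  · exact ⟨v₃, e₀⟩
  · exact ⟨-v₂, by simpa [neg_eq_iff_eq_neg] using e₂⟩
  · exact ⟨v₁, e₁⟩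

theorem exists_mem_koszulLifts {z : Fin res.b1 → S3 k} (hz : res.d1 z = 0)
    (hm : ∀ a, constantCoeff (z a) = 0) : ∃ f, (z, f) ∈ res.koszulLifts := by
  choose w hw using fun a => exists_sum_mul_X_eq_of_constantCoeff_eq_zero (hm a)
  set z₁ : Fin res.b1 → S3 k := fun a => w a 0
  set z₂ : Fin res.b1 → S3 k := fun a => w a 1
  set z₃ : Fin res.b1 → S3 k := fun a => w a 2
  have hz' : z = (X 0 : S3 k) • z₁ + (X 1 : S3 k) • z₂ + (X 2 : S3 k) • z₃ := by
    funext a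
    simp [z₁, z₂, z₃, ← hw a, Fin.sum_univ_three, mul_comm]
  have hcycle (i : Fin res.b0) :
      X 0 * res.d1 z₁ i + X 1 * res.d1 z₂ i + X 2 * res.d1 z₃ i = 0 := by
    simpa [hz] using (congrFun (congrArg res.d1 hz') i).symm
  choose v₁ v₂ v₃ h₁ h₂ h₃ using fun i => koszul_exact_one (hcycle i)
  have hd₁ : res.d1 z₁ = (X 1 : S3 k) • v₁ + (X 2 : S3 k) • v₂ :=
    funext fun i => by simp [h₁ i]
  have hd₂ : res.d1 z₂ = -((X 0 : S3 k) • v₁) + (X 2 : S3 k) • v₃ :=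
    funext fun i => by simp [h₂ i]
  have hd₃ : res.d1 z₃ = -((X 0 : S3 k) • v₂) - (X 1 : S3 k) • v₃ :=
    funext fun i => by simp [h₃ i]
  have hε₁ := mem_range_d1_iff.mp ⟨z₁, hd₁⟩
  have hε₂ := mem_range_d1_iff.mp ⟨z₂, hd₂⟩
  simp only [map_add, map_neg, map_smul, smul_eq_mul] at hε₁ hε₂
  obtain ⟨f, e₁, e₂, e₃⟩ := koszul_exact_two hε₁ hε₂
  exact ⟨f, z₁, z₂, z₃, v₁, v₂, v₃, hz', hd₁, hd₂, hd₃, e₁, e₂, e₃⟩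

theorem gradedPart_mem_koszulLifts {z : Fin res.b1 → S3 k} {f : S3 k}
    (h : (z, f) ∈ res.koszulLifts) (n : ℕ) :
    (gradedPart res.deg1 n z, twistComponent 3 n f) ∈ res.koszulLifts := by
  obtain ⟨z₁, z₂, z₃, v₁, v₂, v₃, e₀, e₁, e₂, e₃, e₄, e₅, e₆⟩ := h
  have hX (i : Fin 3) : (X i : S3 k).IsHomogeneous 1 := isHomogeneous_X k i
  have hd1 := map_gradedPart res.d1 res.hom1 1 n
  have hε := map_gradedPart_eq_twistComponent res.ε (e := 0)
    (fun j => Or.inr ⟨Nat.zero_le _, res.hom0 j⟩) 2 n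
  refine ⟨gradedPart (fun a => res.deg1 a + 1) n z₁, gradedPart (fun a => res.deg1 a + 1) n z₂,
    gradedPart (fun a => res.deg1 a + 1) n z₃, gradedPart (fun a => res.deg0 a + 1 + 1) n v₁,
    gradedPart (fun a => res.deg0 a + 1 + 1) n v₂, gradedPart (fun a => res.deg0 a + 1 + 1) n v₃,
    ?_, ?_, ?_, ?_, ?_, ?_, ?_⟩
  · dsimp only at e₀ ⊢
    simp only [e₀, map_add, gradedPart_smul_of_isHomogeneous (hX _)]
  · simp only [hd1, e₁, map_add, gradedPart_smul_of_isHomogeneous (hX _)]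
  · simp only [hd1, e₂, map_add, map_neg, gradedPart_smul_of_isHomogeneous (hX _)]
  · simp only [hd1, e₃, map_sub, map_neg, gradedPart_smul_of_isHomogeneous (hX _)]
  · rw [hε, e₄, twistComponent_isHomogeneous_mul (hX 2)]
  · rw [hε, e₅, map_neg, twistComponent_isHomogeneous_mul (hX 1)]
  · rw [hε, e₆, twistComponent_isHomogeneous_mul (hX 0)]

theorem exists_eq_d2_of_mem_koszulLifts {z : Fin res.b1 → S3 k} {f : S3 k}
    (h : (z, f) ∈ res.koszulLifts) (hf : f ∈ J) :
    ∃ w₁ w₂ w₃, z = res.d2 ((X 0 : S3 k) • w₁ + (X 1 : S3 k) • w₂ + (X 2 : S3 k) • w₃) := by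
  obtain ⟨z₁, z₂, z₃, v₁, v₂, v₃, e₀, e₁, e₂, e₃, e₄, e₅, e₆⟩ := h
  obtain ⟨g, hg⟩ : f ∈ LinearMap.range res.ε := by rwa [res.range_eps]
  -- Each `vᵢ` differs from the Koszul boundary of `g` by some `d₁ uᵢ`; correcting the `zᵢ` by
  -- the Koszul boundary of `u` puts them in `ker d₁ = im d₂`.
  obtain ⟨u₁, hu₁⟩ : v₁ - (X 2 : S3 k) • g ∈ LinearMap.range res.d1 :=
    mem_range_d1_iff.mpr (by simp [e₄, hg])
  obtain ⟨u₂, hu₂⟩ : v₂ + (X 1 : S3 k) • g ∈ LinearMap.range res.d1 :=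
    mem_range_d1_iff.mpr (by simp [e₅, hg])
  obtain ⟨u₃, hu₃⟩ : v₃ - (X 0 : S3 k) • g ∈ LinearMap.range res.d1 :=
    mem_range_d1_iff.mpr (by simp [e₆, hg])
  obtain ⟨w₁, hw₁⟩ : z₁ - ((X 1 : S3 k) • u₁ + (X 2 : S3 k) • u₂) ∈ LinearMap.range res.d2 :=
    mem_range_d2_iff.mpr (by rw [map_sub, map_add, map_smul, map_smul, e₁, hu₁, hu₂]; module)
  obtain ⟨w₂, hw₂⟩ : z₂ + ((X 0 : S3 k) • u₁ - (X 2 : S3 k) • u₃) ∈ LinearMap.range res.d2 :=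
    mem_range_d2_iff.mpr (by rw [map_add, map_sub, map_smul, map_smul, e₂, hu₁, hu₃]; module)
  obtain ⟨w₃, hw₃⟩ : z₃ + ((X 0 : S3 k) • u₂ + (X 1 : S3 k) • u₃) ∈ LinearMap.range res.d2 :=
    mem_range_d2_iff.mpr (by rw [map_add, map_add, map_smul, map_smul, e₃, hu₂, hu₃]; module)
  refine ⟨w₁, w₂, w₃, ?_⟩
  rw [map_add, map_add, map_smul, map_smul, map_smul, hw₁, hw₂, hw₃]
  dsimp only at e₀
  rw [e₀]
  module

theorem constantCoeff_eq_zero_of_mem_koszulLifts {x : Fin res.b2 → S3 k} {f : S3 k}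
    (h : (res.d2 x, f) ∈ res.koszulLifts) (hf : f ∈ J) (j : Fin res.b2) :
    constantCoeff (x j) = 0 := by
  obtain ⟨w₁, w₂, w₃, hw⟩ := exists_eq_d2_of_mem_koszulLifts h hf
  rw [LinearMap.ker_eq_bot.mp res.inj2 hw]
  simp

theorem exists_mem_koszulLifts_twistComponent (j : Fin res.b2) :
    ∃ f, (res.d2 (Pi.single j 1), twistComponent 3 (res.deg2 j) f) ∈ res.koszulLifts := by
  obtain ⟨f, hf⟩ := exists_mem_koszulLifts (mem_range_d2_iff.mp ⟨_, rfl⟩) (res.min2 _)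
  have hgraded := map_gradedPart res.d2 res.hom2 0 (res.deg2 j) (Pi.single j 1)
  simp only [add_zero, gradedPart_single_one] at hgraded
  exact ⟨f, hgraded ▸ gradedPart_mem_koszulLifts hf (res.deg2 j)⟩

theorem three_le_deg2 (j : Fin res.b2) : 3 ≤ res.deg2 j := by
  by_contra! hj
  obtain ⟨f, hf⟩ := exists_mem_koszulLifts_twistComponent (res := res) j
  rw [twistComponent_of_lt hj] at hf
  simpa using constantCoeff_eq_zero_of_mem_koszulLifts hf J.zero_mem j

theorem card_deg2_add_hilbertFunction_le (n : ℕ) :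
    Fintype.card {j // res.deg2 j = n + 3} + hilbertFunction k J n ≤
      hilbertFunction k J (n + 1) := by
  choose f hf using fun j : {j // res.deg2 j = n + 3} =>
    exists_mem_koszulLifts_twistComponent (res := res) j.1
  set g := fun j => twistComponent 3 (n + 3) (f j)
  have hg (j : {j // res.deg2 j = n + 3}) :
      (res.d2 (Pi.single j.1 1), g j) ∈ res.koszulLifts := by
    simpa only [j.2] using hf j
  refine le_trans ?_ (finrank_comap_mul_X_inf_le J 0 n)
  refine Submodule.card_add_finrank_le
    (inf_le_inf_right _ fun q hq => J.mul_mem_left _ hq) g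
    (fun j => ⟨X_mul_mem_of_mem_koszulLifts (hg j) 0, ?_⟩) fun c hc => ?_
  · rw [SetLike.mem_coe, show g j = _ from twistComponent_add_self 3 n (f j)]
    exact homogeneousComponent_mem n _
  · have hsum : (res.d2 (∑ j, (C (c j) : S3 k) • Pi.single j.1 1), ∑ j, c j • g j) =
        ∑ j, (C (c j) : S3 k) • (res.d2 (Pi.single j.1 1), g j) := by
      simp [Prod.ext_iff, Prod.fst_sum, Prod.snd_sum, smul_eq_C_mul]
    have hmem : _ ∈ res.koszulLifts :=
      hsum ▸ Submodule.sum_mem _ fun j _ => Submodule.smul_mem _ _ (hg j)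
    funext j
    simpa [Finset.sum_apply, Pi.single_apply, Subtype.val_inj, apply_ite constantCoeff] using
      constantCoeff_eq_zero_of_mem_koszulLifts hmem hc.1 j.1

end GradedMinFreeRes

theorem graded_betti_two_le_general
    (k : Type) [Field k] (m : ℕ)
    (f : Fin m → S3 k)
    (res : GradedMinFreeRes k (Ideal.span (Set.range f)))
    (p : ℕ) :
    (Finset.univ.filter fun i => res.deg2 i = p).card +
      hilbertFunction k (Ideal.span (Set.range f)) (p - 3) ≤
    hilbertFunction k (Ideal.span (Set.range f)) (p - 2) := by
  rw [← Fintype.card_subtype]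
  obtain hp | ⟨n, rfl⟩ : p < 3 ∨ ∃ n, p = n + 3 :=
    (lt_or_ge p 3).imp_right fun hp => ⟨p - 3, by omega⟩
  · have : IsEmpty {j // res.deg2 j = p} := ⟨fun j => by have := res.three_le_deg2 j.1; omega⟩
    rw [Fintype.card_eq_zero, zero_add, show p - 3 = p - 2 by omega]
  · simpa using res.card_deg2_add_hilbertFunction_le n

/-- Let `J = (f₁,…,f_m) ⊆ T = k[s,t,u]` be a homogeneous ideal.
Then for every `p` the graded Betti number `β_{2,p}(J) = dim_k Tor₂^T(J,k)_p`
satisfies `β_{2,p}(J) ≤ H_J(p−2) − H_J(p−3)`, i.e.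
`β_{2,p}(J) + H_J(p−3) ≤ H_J(p−2)`. -/
theorem graded_betti_two_le
    (k : Type) [Field k] (m : ℕ)
    (f : Fin m → S3 k) (δ : Fin m → ℕ)
    (hhom : ∀ i, (f i).IsHomogeneous (δ i))
    (res : GradedMinFreeRes k (Ideal.span (Set.range f)))
    (p : ℕ) :
    (Finset.univ.filter fun i => res.deg2 i = p).card +
      hilbertFunction k (Ideal.span (Set.range f)) (p - 3) ≤
    hilbertFunction k (Ideal.span (Set.range f)) (p - 2) :=
  graded_betti_two_le_general k m f res p
end
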